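/- Let N ≥ 3 and s ∈ (0,1). Let u : ℝ^N → ℝ be measurable, write u⁺ := max(u, 0) and u⁻ := max(−u, 0), and assume: u⁺ and u⁻ lie in H¹(ℝ^N) with ∫_{ℝ^N} |∇u|² dx = ∫_{ℝ^N} |∇u⁺|² dx + ∫_{ℝ^N} |∇u⁻|² dx; the quantities [u⁺]_s², [u⁻]_s², D := ∫_{ℝ^N}∫_{ℝ^N} u⁺(x) u⁻(y) / |x − y|^{N+2s} dx dy, and ∫_{ℝ^N} |u|^{2*} dx are finite; and the tested weak-solution identities hold: ∫_{ℝ^N} |∇u⁺|² dx + [u⁺]_s² + 2D = ∫_{ℝ^N} (u⁺)^{2*} dx and ∫_{ℝ^N} |∇u⁻|² dx + [u⁻]_s² + 2D = ∫_{ℝ^N} (u⁻)^{2*} dx. Then the energy I(u) := ½ ( ∫_{ℝ^N} |∇u|² dx + [u]_s² ) − (1/2*) ∫_{ℝ^N} |u|^{2*} dx satisfies the identity I(u) = (1/N) ( ∫_{ℝ^N} |∇u⁺|² dx + ∫_{ℝ^N} |∇u⁻|² dx + [u⁺]_s² + [u⁻]_s² ) + (4/N) D. -/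

import Mathlib

open MeasureTheory Real Set

/-- The squared Gagliardo seminorm of order `s` on `ℝ^N`. -/
noncomputable def gagliardoSq (N : ℕ) (s : ℝ) (u : EuclideanSpace ℝ (Fin N) → ℝ) : ℝ :=
  ∫ p : EuclideanSpace ℝ (Fin N) × EuclideanSpace ℝ (Fin N),
    (u p.1 - u p.2) ^ 2 / ‖p.1 - p.2‖ ^ ((N : ℝ) + 2 * s)

/-- The positive part `u⁺ = max(u,0)`. -/
noncomputable def uPos {N : ℕ} (u : EuclideanSpace ℝ (Fin N) → ℝ) :
    EuclideanSpace ℝ (Fin N) → ℝ := fun x => max (u x) 0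

/-- The negative part `u⁻ = max(−u,0)`. -/
noncomputable def uNeg {N : ℕ} (u : EuclideanSpace ℝ (Fin N) → ℝ) :
    EuclideanSpace ℝ (Fin N) → ℝ := fun x => max (-u x) 0

/-- The nonlocal interaction term
`D = ∫∫ u⁺(x)u⁻(y)/|x−y|^{N+2s} dx dy`. -/
noncomputable def interact (N : ℕ) (s : ℝ) (u : EuclideanSpace ℝ (Fin N) → ℝ) : ℝ :=
  ∫ p : EuclideanSpace ℝ (Fin N) × EuclideanSpace ℝ (Fin N),
    uPos u p.1 * uNeg u p.2 / ‖p.1 - p.2‖ ^ ((N : ℝ) + 2 * s)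

/-- Energy identity for (sign-changing) solutions of the mixed local–nonlocal critical
problem tested against `u⁺` and `u⁻`:
`I(u) = (1/N)(‖∇u⁺‖₂² + ‖∇u⁻‖₂² + [u⁺]_s² + [u⁻]_s²) + (4/N)D`. -/
theorem stmt_18 (N : ℕ) (hN : 3 ≤ N) (s : ℝ) (hs : s ∈ Set.Ioo (0 : ℝ) 1)
    (u : EuclideanSpace ℝ (Fin N) → ℝ) (hu : Measurable u)
    (hpos : MemLp (uPos u) 2 volume)
    (hneg : MemLp (uNeg u) 2 volume)
    (hgradPos : Integrable (fun x => ‖gradient (uPos u) x‖ ^ 2) volume)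
    (hgradNeg : Integrable (fun x => ‖gradient (uNeg u) x‖ ^ 2) volume)
    (hgradSplit : (∫ x, ‖gradient u x‖ ^ 2) =
      (∫ x, ‖gradient (uPos u) x‖ ^ 2) + ∫ x, ‖gradient (uNeg u) x‖ ^ 2)
    (hgagPos : Integrable
      (fun p : EuclideanSpace ℝ (Fin N) × EuclideanSpace ℝ (Fin N) =>
        (uPos u p.1 - uPos u p.2) ^ 2 / ‖p.1 - p.2‖ ^ ((N : ℝ) + 2 * s)) volume)
    (hgagNeg : Integrable
      (fun p : EuclideanSpace ℝ (Fin N) × EuclideanSpace ℝ (Fin N) =>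
        (uNeg u p.1 - uNeg u p.2) ^ 2 / ‖p.1 - p.2‖ ^ ((N : ℝ) + 2 * s)) volume)
    (hD : Integrable
      (fun p : EuclideanSpace ℝ (Fin N) × EuclideanSpace ℝ (Fin N) =>
        uPos u p.1 * uNeg u p.2 / ‖p.1 - p.2‖ ^ ((N : ℝ) + 2 * s)) volume)
    (hcrit : Integrable (fun x => |u x| ^ (2 * (N : ℝ) / ((N : ℝ) - 2))) volume)
    (htestPos : (∫ x, ‖gradient (uPos u) x‖ ^ 2) + gagliardoSq N s (uPos u) +
        2 * interact N s u = ∫ x, uPos u x ^ (2 * (N : ℝ) / ((N : ℝ) - 2)))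
    (htestNeg : (∫ x, ‖gradient (uNeg u) x‖ ^ 2) + gagliardoSq N s (uNeg u) +
        2 * interact N s u = ∫ x, uNeg u x ^ (2 * (N : ℝ) / ((N : ℝ) - 2))) :
    (1 / 2) * ((∫ x, ‖gradient u x‖ ^ 2) + gagliardoSq N s u) -
        (((N : ℝ) - 2) / (2 * N)) * ∫ x, |u x| ^ (2 * (N : ℝ) / ((N : ℝ) - 2)) =
      (1 / N) * ((∫ x, ‖gradient (uPos u) x‖ ^ 2) +
          (∫ x, ‖gradient (uNeg u) x‖ ^ 2) +
          gagliardoSq N s (uPos u) + gagliardoSq N s (uNeg u)) +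
        (4 / N) * interact N s u := by
  have hN2 : (2:ℝ) < (N:ℝ) := by exact_mod_cast lt_of_lt_of_le (by norm_num) hN
  have hNne : (N:ℝ) ≠ 0 := by linarith
  set p : ℝ := 2 * (N : ℝ) / ((N : ℝ) - 2) with hpdef
  have hp0 : 0 < p := by apply div_pos <;> linarith
  have hpne : p ≠ 0 := ne_of_gt hp0
  -- pointwise facts
  have hsum : ∀ x, uPos u x - uNeg u x = u x := by
    intro x; simp only [uPos, uNeg]
    rcases le_total (u x) 0 with h | h
    · rw [max_eq_right h, max_eq_left (by linarith)]; ring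
    · rw [max_eq_left h, max_eq_right (by linarith)]; ring
  have hprod : ∀ x, uPos u x * uNeg u x = 0 := by
    intro x; simp only [uPos, uNeg]
    rcases le_total (u x) 0 with h | h
    · rw [max_eq_right h]; ring
    · rw [max_eq_right (by linarith : -u x ≤ 0)]; ring
  have hPosnn : ∀ x, 0 ≤ uPos u x := fun x => le_max_right _ _
  have hNegnn : ∀ x, 0 ≤ uNeg u x := fun x => le_max_right _ _
  -- critical integral split
  have hposMeas : Measurable (uPos u) := hu.max measurable_const
  have hnegMeas : Measurable (uNeg u) := hu.neg.max measurable_const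
  have hPosle : ∀ x, uPos u x ≤ |u x| := fun x => max_le (le_abs_self _) (abs_nonneg _)
  have hNegle : ∀ x, uNeg u x ≤ |u x| := fun x => max_le (neg_le_abs _) (abs_nonneg _)
  have hintPos : Integrable (fun x => uPos u x ^ p) volume := by
    refine hcrit.mono (((Real.continuous_rpow_const hp0.le).measurable.comp hposMeas).aestronglyMeasurable) ?_
    filter_upwards with x
    rw [Real.norm_eq_abs, Real.norm_eq_abs, abs_of_nonneg (Real.rpow_nonneg (hPosnn x) _),
      abs_of_nonneg (Real.rpow_nonneg (abs_nonneg _) _)]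
    exact Real.rpow_le_rpow (hPosnn x) (hPosle x) hp0.le
  have hintNeg : Integrable (fun x => uNeg u x ^ p) volume := by
    refine hcrit.mono (((Real.continuous_rpow_const hp0.le).measurable.comp hnegMeas).aestronglyMeasurable) ?_
    filter_upwards with x
    rw [Real.norm_eq_abs, Real.norm_eq_abs, abs_of_nonneg (Real.rpow_nonneg (hNegnn x) _),
      abs_of_nonneg (Real.rpow_nonneg (abs_nonneg _) _)]
    exact Real.rpow_le_rpow (hNegnn x) (hNegle x) hp0.le
  have hcritSplit : (∫ x, |u x| ^ p) = (∫ x, uPos u x ^ p) + ∫ x, uNeg u x ^ p := by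
    rw [← integral_add hintPos hintNeg]
    refine integral_congr_ae (Filter.Eventually.of_forall fun x => ?_)
    simp only [uPos, uNeg]
    rcases le_total (u x) 0 with h | h
    · rw [max_eq_right h, max_eq_left (by linarith), abs_of_nonpos h,
        Real.zero_rpow hpne, zero_add]
    · rw [max_eq_left h, max_eq_right (by linarith : -u x ≤ 0), abs_of_nonneg h,
        Real.zero_rpow hpne, add_zero]
  -- swap facts
  have hswapInt : Integrable
      (fun q : EuclideanSpace ℝ (Fin N) × EuclideanSpace ℝ (Fin N) =>
        uPos u q.2 * uNeg u q.1 / ‖q.1 - q.2‖ ^ ((N : ℝ) + 2 * s)) volume := by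
    have h1 : Integrable
        (fun q : EuclideanSpace ℝ (Fin N) × EuclideanSpace ℝ (Fin N) =>
          uPos u q.1 * uNeg u q.2 / ‖q.1 - q.2‖ ^ ((N : ℝ) + 2 * s))
        ((volume : Measure (EuclideanSpace ℝ (Fin N))).prod volume) := by
      rw [← Measure.volume_eq_prod]; exact hD
    have h2 := h1.swap
    rw [← Measure.volume_eq_prod] at h2
    refine h2.congr (Filter.Eventually.of_forall fun q => ?_)
    simp only [Function.comp, Prod.swap, norm_sub_rev q.2 q.1]
  have hswapEq : (∫ q : EuclideanSpace ℝ (Fin N) × EuclideanSpace ℝ (Fin N),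
      uPos u q.2 * uNeg u q.1 / ‖q.1 - q.2‖ ^ ((N : ℝ) + 2 * s)) = interact N s u := by
    have h2 := integral_prod_swap (μ := (volume : Measure (EuclideanSpace ℝ (Fin N))))
      (ν := (volume : Measure (EuclideanSpace ℝ (Fin N))))
      (f := fun r : EuclideanSpace ℝ (Fin N) × EuclideanSpace ℝ (Fin N) =>
        uPos u r.1 * uNeg u r.2 / ‖r.1 - r.2‖ ^ ((N : ℝ) + 2 * s))
    rw [← Measure.volume_eq_prod] at h2
    unfold interact
    rw [← h2]
    refine integral_congr_ae (Filter.Eventually.of_forall fun q => ?_)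
    simp only [Prod.fst_swap, Prod.snd_swap, norm_sub_rev q.2 q.1]
  -- Gagliardo split
  have hgagSplit : gagliardoSq N s u =
      gagliardoSq N s (uPos u) + gagliardoSq N s (uNeg u) + 4 * interact N s u := by
    have key : (fun q : EuclideanSpace ℝ (Fin N) × EuclideanSpace ℝ (Fin N) =>
        (u q.1 - u q.2) ^ 2 / ‖q.1 - q.2‖ ^ ((N : ℝ) + 2 * s)) =
        fun q => (uPos u q.1 - uPos u q.2) ^ 2 / ‖q.1 - q.2‖ ^ ((N : ℝ) + 2 * s) +
          (uNeg u q.1 - uNeg u q.2) ^ 2 / ‖q.1 - q.2‖ ^ ((N : ℝ) + 2 * s) +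
          (2 * (uPos u q.1 * uNeg u q.2 / ‖q.1 - q.2‖ ^ ((N : ℝ) + 2 * s)) +
           2 * (uPos u q.2 * uNeg u q.1 / ‖q.1 - q.2‖ ^ ((N : ℝ) + 2 * s))) := by
      funext q
      have h1 := hsum q.1
      have h2 := hsum q.2
      have hab := hprod q.1
      have hcd := hprod q.2
      have hnum : (u q.1 - u q.2) ^ 2 = (uPos u q.1 - uPos u q.2) ^ 2 +
          (uNeg u q.1 - uNeg u q.2) ^ 2 + (2 * (uPos u q.1 * uNeg u q.2) +
          2 * (uPos u q.2 * uNeg u q.1)) := by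
        rw [← h1, ← h2]; linear_combination (-2 : ℝ) * hab + (-2 : ℝ) * hcd
      rw [hnum]; ring
    have i1 : Integrable (fun q : EuclideanSpace ℝ (Fin N) × EuclideanSpace ℝ (Fin N) =>
        (uPos u q.1 - uPos u q.2) ^ 2 / ‖q.1 - q.2‖ ^ ((N : ℝ) + 2 * s) +
        (uNeg u q.1 - uNeg u q.2) ^ 2 / ‖q.1 - q.2‖ ^ ((N : ℝ) + 2 * s)) volume :=
      hgagPos.add hgagNeg
    have i2 : Integrable (fun q : EuclideanSpace ℝ (Fin N) × EuclideanSpace ℝ (Fin N) =>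
        2 * (uPos u q.1 * uNeg u q.2 / ‖q.1 - q.2‖ ^ ((N : ℝ) + 2 * s)) +
        2 * (uPos u q.2 * uNeg u q.1 / ‖q.1 - q.2‖ ^ ((N : ℝ) + 2 * s))) volume :=
      (hD.const_mul 2).add (hswapInt.const_mul 2)
    unfold gagliardoSq interact
    rw [key, integral_add i1 i2, integral_add hgagPos hgagNeg,
      integral_add (hD.const_mul 2) (hswapInt.const_mul 2),
      integral_const_mul, integral_const_mul, hswapEq]
    unfold interact
    ring
  -- finish
  rw [hgradSplit, hgagSplit, hcritSplit, ← htestPos, ← htestNeg]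
  field_simp
  ring
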